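/- arXiv:1812.04048 — 3 statements merged into one kernel-verified Lean document; each statement's English description precedes it below -/
import Mathlib

section
/- Define h_k = ∑_{i=1}^{k} β^{k-i} / i^γ for β ∈ [0,1) and γ > 0. Then h_k = O(1/k^γ), i.e., there exists C > 0 such that h_k ≤ C / k^γ for all k ≥ 1. -/
lemma conv_summable (β γ : ℝ) (hβ0 : 0 ≤ β) (hβ1 : β < 1) (hγ : 0 < γ) :
    Summable (fun j : ℕ => ((j : ℝ) + 1) ^ γ * β ^ j) := by
  set n := ⌈γ⌉₊ with hn
  apply Summable.of_nonneg_of_le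
    (f := fun j : ℕ => (2 : ℝ) ^ n * ((j : ℝ) ^ n * β ^ j + β ^ j))
  · intro j
    have h1 : (0:ℝ) ≤ ((j : ℝ) + 1) := by positivity
    positivity
  · intro j
    have hb : (0:ℝ) ≤ β ^ j := pow_nonneg hβ0 j
    have h1 : ((j : ℝ) + 1) ^ γ ≤ ((j : ℝ) + 1) ^ (n : ℕ) := by
      rw [← Real.rpow_natCast ((j : ℝ) + 1) n]
      have hj0 : (0:ℝ) ≤ (j:ℝ) := Nat.cast_nonneg j
      apply Real.rpow_le_rpow_of_exponent_le (by linarith)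
      exact_mod_cast Nat.le_ceil γ
    have h2 : ((j : ℝ) + 1) ^ (n : ℕ) ≤ 2 ^ n * ((j : ℝ) ^ n + 1) := by
      rcases Nat.eq_zero_or_pos j with h | h
      · subst h
        simp only [Nat.cast_zero, zero_add, one_pow]
        have : (1:ℝ) ≤ 2 ^ n := one_le_pow₀ (by norm_num : (1:ℝ) ≤ 2)
        nlinarith [pow_nonneg (le_refl (0:ℝ)) n]
      · have hj : (1:ℝ) ≤ (j : ℝ) := by exact_mod_cast h
        calc ((j : ℝ) + 1) ^ n ≤ ((2 : ℝ) * j) ^ n := by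
              apply pow_le_pow_left₀ (by positivity) (by linarith)
          _ = 2 ^ n * (j : ℝ) ^ n := mul_pow 2 _ n
          _ ≤ 2 ^ n * ((j : ℝ) ^ n + 1) := by
              have : (0:ℝ) ≤ (2:ℝ)^n := by positivity
              nlinarith
    calc ((j : ℝ) + 1) ^ γ * β ^ j ≤ ((j : ℝ) + 1) ^ (n : ℕ) * β ^ j :=
          mul_le_mul_of_nonneg_right h1 hb
      _ ≤ (2 ^ n * ((j : ℝ) ^ n + 1)) * β ^ j := mul_le_mul_of_nonneg_right h2 hb
      _ = 2 ^ n * ((j : ℝ) ^ n * β ^ j + β ^ j) := by ring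
  · apply Summable.mul_left
    have hβn : ‖β‖ < 1 := by rwa [Real.norm_eq_abs, abs_of_nonneg hβ0]
    exact (summable_pow_mul_geometric_of_norm_lt_one n hβn).add
      (summable_geometric_of_lt_one hβ0 hβ1)

/-- The convolution `h_k = ∑_{i=1}^k β^{k-i} / i^γ` of a geometric sequence with a
power-law sequence is `O(1/k^γ)`. -/
theorem convolution_bigO (β γ : ℝ) (hβ0 : 0 ≤ β) (hβ1 : β < 1) (hγ : 0 < γ) :
    ∃ C > 0, ∀ k : ℕ, 1 ≤ k →
      (∑ i ∈ Finset.Icc 1 k, β ^ (k - i) / (i : ℝ) ^ γ) ≤ C / (k : ℝ) ^ γ := by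
  have hsum := conv_summable β γ hβ0 hβ1 hγ
  have htnn : 0 ≤ ∑' j : ℕ, ((j : ℝ) + 1) ^ γ * β ^ j :=
    tsum_nonneg fun j => by positivity
  refine ⟨(∑' j : ℕ, ((j : ℝ) + 1) ^ γ * β ^ j) + 1, by linarith, ?_⟩
  intro k hk
  have hk0 : (0:ℝ) < (k : ℝ) := by exact_mod_cast hk
  have hkpos : (0:ℝ) < (k : ℝ) ^ γ := Real.rpow_pos_of_pos hk0 γ
  rw [le_div_iff₀ hkpos]
  have key : ∀ i ∈ Finset.Icc 1 k,
      β ^ (k - i) / (i : ℝ) ^ γ * (k : ℝ) ^ γ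
        ≤ β ^ (k - i) * ((k - i + 1 : ℕ) : ℝ) ^ γ := by
    intro i hi
    simp only [Finset.mem_Icc] at hi
    obtain ⟨hi1, hik⟩ := hi
    have hi0 : (0:ℝ) < (i : ℝ) := by exact_mod_cast hi1
    have hipos : (0:ℝ) < (i : ℝ) ^ γ := Real.rpow_pos_of_pos hi0 γ
    have hnat : k ≤ i * (k - i + 1) := by
      obtain ⟨d, rfl⟩ : ∃ d, k = i + d := ⟨k - i, by omega⟩
      have : d ≤ i * d := Nat.le_mul_of_pos_left d hi1
      calc i + d ≤ i + i * d := by omega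
        _ ≤ i * (i + d - i + 1) := by
            rw [Nat.add_sub_cancel_left]
            ring_nf
            omega
    have hdiv : (k : ℝ) / (i : ℝ) ≤ ((k - i + 1 : ℕ) : ℝ) := by
      rw [div_le_iff₀ hi0]
      have : (k : ℝ) ≤ ((i * (k - i + 1) : ℕ) : ℝ) := by exact_mod_cast hnat
      rw [Nat.cast_mul] at this
      linarith [this]
    have hq : (k : ℝ) ^ γ / (i : ℝ) ^ γ ≤ ((k - i + 1 : ℕ) : ℝ) ^ γ := by
      rw [← Real.div_rpow (le_of_lt hk0) (le_of_lt hi0)]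
      exact Real.rpow_le_rpow (by positivity) hdiv (le_of_lt hγ)
    have hb : (0:ℝ) ≤ β ^ (k - i) := pow_nonneg hβ0 _
    calc β ^ (k - i) / (i : ℝ) ^ γ * (k : ℝ) ^ γ
        = β ^ (k - i) * ((k : ℝ) ^ γ / (i : ℝ) ^ γ) := by ring
      _ ≤ β ^ (k - i) * ((k - i + 1 : ℕ) : ℝ) ^ γ := mul_le_mul_of_nonneg_left hq hb
  calc (∑ i ∈ Finset.Icc 1 k, β ^ (k - i) / (i : ℝ) ^ γ) * (k : ℝ) ^ γ
      = ∑ i ∈ Finset.Icc 1 k, β ^ (k - i) / (i : ℝ) ^ γ * (k : ℝ) ^ γ :=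
        Finset.sum_mul _ _ _
    _ ≤ ∑ i ∈ Finset.Icc 1 k, β ^ (k - i) * ((k - i + 1 : ℕ) : ℝ) ^ γ :=
        Finset.sum_le_sum key
    _ = ∑ j ∈ Finset.range k, β ^ j * ((j + 1 : ℕ) : ℝ) ^ γ := by
        apply Finset.sum_nbij' (fun i => k - i) (fun j => k - j)
        · intro i hi; simp only [Finset.mem_Icc] at hi; simp only [Finset.mem_range]; omega
        · intro j hj; simp only [Finset.mem_range] at hj; simp only [Finset.mem_Icc]; omega
        · intro i hi; simp only [Finset.mem_Icc] at hi; omega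
        · intro j hj; simp only [Finset.mem_range] at hj; omega
        · intro i hi; rfl
    _ = ∑ j ∈ Finset.range k, ((j : ℝ) + 1) ^ γ * β ^ j := by
        apply Finset.sum_congr rfl
        intro j _
        push_cast
        ring
    _ ≤ ∑' j : ℕ, ((j : ℝ) + 1) ^ γ * β ^ j :=
        Summable.sum_le_tsum _ (fun j _ => by positivity) hsum
    _ ≤ (∑' j : ℕ, ((j : ℝ) + 1) ^ γ * β ^ j) + 1 := by linarith
end

section
/- Define h_k = ∑_{i=1}^{k} β^{k-i} / i^γ for β ∈ [0,1) and γ > 0. Then k^γ · h_k converges to 1/(1-β) as k → ∞. -/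
open Filter Finset

/-- Sharp asymptotics: `k^γ · h_k → 1/(1-β)` where `h_k = ∑_{i=1}^k β^{k-i}/i^γ`. -/
theorem convolution_sharp_limit (β γ : ℝ) (hβ0 : 0 ≤ β) (hβ1 : β < 1) (hγ : 0 < γ) :
    Filter.Tendsto
      (fun k : ℕ => (k : ℝ) ^ γ * ∑ i ∈ Finset.Icc 1 k, β ^ (k - i) / (i : ℝ) ^ γ)
      Filter.atTop (nhds (1 / (1 - β))) := by
  set q : ℕ → ℕ := fun k => (k + 1) / 2 with hq_def
  set g : ℕ → ℕ → ℝ := fun k j =>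
    if 2 * j < k then β ^ j * ((k : ℝ) / ((k : ℝ) - (j : ℝ))) ^ γ else 0 with hg_def
  set T : ℕ → ℝ := fun k =>
    ∑ j ∈ Finset.Ico (q k) k, β ^ j * ((k : ℝ) / ((k : ℝ) - (j : ℝ))) ^ γ with hT_def
  -- key decomposition
  have key : ∀ k : ℕ, 1 ≤ k →
      (k : ℝ) ^ γ * ∑ i ∈ Finset.Icc 1 k, β ^ (k - i) / (i : ℝ) ^ γ
        = (∑' j, g k j) + T k := by
    intro k hk
    have h1 : (k : ℝ) ^ γ * ∑ i ∈ Finset.Icc 1 k, β ^ (k - i) / (i : ℝ) ^ γ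
        = ∑ i ∈ Finset.Icc 1 k, β ^ (k - i) * ((k : ℝ) / (i : ℝ)) ^ γ := by
      rw [Finset.mul_sum]
      refine Finset.sum_congr rfl fun i hi => ?_
      rw [Real.div_rpow (Nat.cast_nonneg k) (Nat.cast_nonneg i)]
      ring
    have h2 : ∑ i ∈ Finset.Icc 1 k, β ^ (k - i) * ((k : ℝ) / (i : ℝ)) ^ γ
        = ∑ j ∈ Finset.range k, β ^ j * ((k : ℝ) / ((k : ℝ) - (j : ℝ))) ^ γ := by
      refine Finset.sum_nbij' (fun i => k - i) (fun j => k - j) ?_ ?_ ?_ ?_ ?_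
      · intro i hi; simp only [Finset.mem_Icc] at hi; simp only [Finset.mem_range]; omega
      · intro j hj; simp only [Finset.mem_range] at hj; simp only [Finset.mem_Icc]; omega
      · intro i hi; simp only [Finset.mem_Icc] at hi; show k - (k - i) = i; omega
      · intro j hj; simp only [Finset.mem_range] at hj; show k - (k - j) = j; omega
      · intro i hi
        simp only [Finset.mem_Icc] at hi
        have hcast : ((k - i : ℕ) : ℝ) = (k : ℝ) - (i : ℝ) := by
          push_cast [hi.2]; ring
        rw [hcast]
        congr 2
        ring
    have hqk : q k ≤ k := by simp only [hq_def]; omega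
    have h3 : ∑ j ∈ Finset.range k, β ^ j * ((k : ℝ) / ((k : ℝ) - (j : ℝ))) ^ γ
        = (∑ j ∈ Finset.range (q k), β ^ j * ((k : ℝ) / ((k : ℝ) - (j : ℝ))) ^ γ) + T k := by
      rw [Finset.range_eq_Ico, ← Finset.sum_Ico_consecutive _ (Nat.zero_le (q k)) hqk, ← Finset.range_eq_Ico]
    have h4 : (∑' j, g k j)
        = ∑ j ∈ Finset.range (q k), β ^ j * ((k : ℝ) / ((k : ℝ) - (j : ℝ))) ^ γ := by
      rw [tsum_eq_sum (s := Finset.range (q k)) ?_]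
      · refine Finset.sum_congr rfl fun j hj => ?_
        simp only [Finset.mem_range] at hj
        have hlt : 2 * j < k := by simp only [hq_def] at hj; omega
        simp only [hg_def, if_pos hlt]
      · intro j hj
        simp only [Finset.mem_range, not_lt] at hj
        have hnlt : ¬ 2 * j < k := by simp only [hq_def] at hj; omega
        simp only [hg_def, if_neg hnlt]
    rw [h1, h2, h3, h4]
  -- limit of the tsum part
  have hg_lim : Tendsto (fun k => ∑' j, g k j) atTop (nhds (1 / (1 - β))) := by
    have hsum : Summable (fun j : ℕ => 2 ^ γ * β ^ j) :=
      (summable_geometric_of_lt_one hβ0 hβ1).mul_left _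
    have hab : ∀ j : ℕ, Tendsto (fun k => g k j) atTop (nhds (β ^ j)) := by
      intro j
      have h1 : Tendsto (fun k : ℕ => 1 - (j : ℝ) / (k : ℝ)) atTop (nhds 1) := by
        have := (tendsto_const_nhds (x := (1:ℝ)) (f := atTop (α := ℕ))).sub
          (tendsto_const_div_atTop_nhds_zero_nat (j : ℝ))
        simpa using this
      have h2 : Tendsto (fun k : ℕ => (1 - (j : ℝ) / (k : ℝ))⁻¹) atTop (nhds 1) := by
        simpa using h1.inv₀ one_ne_zero
      have h3 : Tendsto (fun k : ℕ => (k : ℝ) / ((k : ℝ) - (j : ℝ))) atTop (nhds 1) := by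
        refine h2.congr' ?_
        filter_upwards [eventually_gt_atTop j] with k hk
        have hk0 : (0 : ℝ) < (k : ℝ) := by
          have : 0 < k := by omega
          positivity
        have hkj : (k : ℝ) - (j : ℝ) ≠ 0 := by
          have : (j : ℝ) < (k : ℝ) := by exact_mod_cast hk
          linarith
        field_simp
      have h4 : Tendsto (fun k : ℕ => β ^ j * ((k : ℝ) / ((k : ℝ) - (j : ℝ))) ^ γ)
          atTop (nhds (β ^ j)) := by
        have := (h3.rpow_const (Or.inr hγ.le)).const_mul (β ^ j)
        simpa [Real.one_rpow] using this
      refine h4.congr' ?_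
      filter_upwards [eventually_gt_atTop (2 * j)] with k hk
      simp only [hg_def, if_pos hk]
    have h_bound : ∀ᶠ k in atTop, ∀ j : ℕ, ‖g k j‖ ≤ 2 ^ γ * β ^ j := by
      refine Filter.Eventually.of_forall fun k j => ?_
      simp only [hg_def]
      by_cases h : 2 * j < k
      · rw [if_pos h]
        have hjk : (j : ℝ) < (k : ℝ) := by exact_mod_cast (by omega : j < k)
        have hr0 : (0 : ℝ) ≤ (k : ℝ) / ((k : ℝ) - (j : ℝ)) := by
          apply div_nonneg (Nat.cast_nonneg k); linarith
        have hr2 : (k : ℝ) / ((k : ℝ) - (j : ℝ)) ≤ 2 := by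
          rw [div_le_iff₀ (by linarith)]
          have : (2 * j : ℝ) ≤ (k : ℝ) := by exact_mod_cast (by omega : 2 * j ≤ k)
          linarith
        have hrp : ((k : ℝ) / ((k : ℝ) - (j : ℝ))) ^ γ ≤ (2 : ℝ) ^ γ :=
          Real.rpow_le_rpow hr0 hr2 hγ.le
        rw [Real.norm_eq_abs, abs_of_nonneg (by positivity)]
        rw [mul_comm ((2:ℝ)^γ) (β ^ j)]
        exact mul_le_mul_of_nonneg_left hrp (by positivity)
      · rw [if_neg h]
        simp only [norm_zero]
        positivity
    have := tendsto_tsum_of_dominated_convergence hsum hab h_bound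
    have htsum : (∑' j : ℕ, β ^ j) = 1 / (1 - β) := by
      rw [tsum_geometric_of_lt_one hβ0 hβ1, one_div]
    rw [htsum] at this
    exact this
  -- limit of the tail part
  have hT_lim : Tendsto T atTop (nhds 0) := by
    set n : ℕ := ⌈γ⌉₊ + 2 with hn_def
    set W : ℕ → ℝ := fun m => 2 ^ n * ((m : ℝ) ^ n * β ^ m) with hW_def
    have hW_lim : Tendsto W atTop (nhds 0) := by
      have hβn : ‖β‖ < 1 := by rw [Real.norm_eq_abs, abs_of_nonneg hβ0]; exact hβ1
      have hsum := summable_pow_mul_geometric_of_norm_lt_one (R := ℝ) n hβn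
      have := (hsum.tendsto_atTop_zero).const_mul ((2:ℝ) ^ n)
      simpa [hW_def] using this
    have hq_top : Tendsto q atTop atTop := by
      refine tendsto_atTop_atTop.2 fun b => ⟨2 * b, fun k hk => ?_⟩
      simp only [hq_def]; omega
    have hWq : Tendsto (fun k => W (q k)) atTop (nhds 0) := hW_lim.comp hq_top
    refine squeeze_zero' ?_ ?_ hWq
    · filter_upwards with k
      refine Finset.sum_nonneg fun j hj => ?_
      have hjk : j < k := (Finset.mem_Ico.mp hj).2
      have : (j : ℝ) < (k : ℝ) := by exact_mod_cast hjk
      have h1 : (0:ℝ) ≤ (k : ℝ) / ((k : ℝ) - (j : ℝ)) := div_nonneg (Nat.cast_nonneg k) (by linarith)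
      positivity
    · filter_upwards [eventually_ge_atTop 1] with k hk
      -- each term ≤ β ^ q k * k ^ γ
      have hterm : ∀ j ∈ Finset.Ico (q k) k,
          β ^ j * ((k : ℝ) / ((k : ℝ) - (j : ℝ))) ^ γ ≤ β ^ q k * (k : ℝ) ^ γ := by
        intro j hj
        obtain ⟨hj1, hj2⟩ := Finset.mem_Ico.mp hj
        have hjk : (j : ℝ) < (k : ℝ) := by exact_mod_cast hj2
        have hden : (1:ℝ) ≤ (k : ℝ) - (j : ℝ) := by
          have : (j : ℝ) + 1 ≤ (k : ℝ) := by exact_mod_cast hj2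
          linarith
        have hβle : β ^ j ≤ β ^ q k := pow_le_pow_of_le_one hβ0 hβ1.le hj1
        have hr0 : (0:ℝ) ≤ (k : ℝ) / ((k : ℝ) - (j : ℝ)) :=
          div_nonneg (Nat.cast_nonneg k) (by linarith)
        have hrk : (k : ℝ) / ((k : ℝ) - (j : ℝ)) ≤ (k : ℝ) :=
          div_le_self (Nat.cast_nonneg k) hden
        have hrp : ((k : ℝ) / ((k : ℝ) - (j : ℝ))) ^ γ ≤ (k : ℝ) ^ γ :=
          Real.rpow_le_rpow hr0 hrk hγ.le
        exact mul_le_mul hβle hrp (Real.rpow_nonneg hr0 γ) (by positivity)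
      have hsum_le : T k ≤ (k : ℝ) * (β ^ q k * (k : ℝ) ^ γ) := by
        calc T k ≤ (Finset.Ico (q k) k).card • (β ^ q k * (k : ℝ) ^ γ) :=
              Finset.sum_le_card_nsmul _ _ _ hterm
          _ = ((Finset.Ico (q k) k).card : ℝ) * (β ^ q k * (k : ℝ) ^ γ) := by
              rw [nsmul_eq_mul]
          _ ≤ (k : ℝ) * (β ^ q k * (k : ℝ) ^ γ) := by
              apply mul_le_mul_of_nonneg_right
              · have : (Finset.Ico (q k) k).card ≤ k := by
                  rw [Nat.card_Ico]; omega
                exact_mod_cast this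
              · positivity
      refine hsum_le.trans ?_
      -- now k * (β ^ q k * k ^ γ) ≤ W (q k)
      have hk1 : (1:ℝ) ≤ (k : ℝ) := by exact_mod_cast hk
      have hkpos : (0:ℝ) < (k : ℝ) := by linarith
      have hstep1 : (k : ℝ) * (k : ℝ) ^ γ ≤ (k : ℝ) ^ (n : ℕ) := by
        have e1 : (k : ℝ) * (k : ℝ) ^ γ = (k : ℝ) ^ ((1 : ℝ) + γ) := by
          rw [Real.rpow_add hkpos, Real.rpow_one]
        have e2 : (k : ℝ) ^ ((1 : ℝ) + γ) ≤ (k : ℝ) ^ ((n : ℕ) : ℝ) := by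
          apply Real.rpow_le_rpow_of_exponent_le hk1
          have : γ ≤ ⌈γ⌉₊ := Nat.le_ceil γ
          simp only [hn_def]
          push_cast
          linarith
        rw [e1]
        calc (k : ℝ) ^ ((1 : ℝ) + γ) ≤ (k : ℝ) ^ ((n : ℕ) : ℝ) := e2
          _ = (k : ℝ) ^ (n : ℕ) := Real.rpow_natCast _ _
      have hstep2 : (k : ℝ) ^ (n : ℕ) ≤ (2 * (q k : ℝ)) ^ (n : ℕ) := by
        apply pow_le_pow_left₀ (Nat.cast_nonneg k)
        have : k ≤ 2 * q k := by simp only [hq_def]; omega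
        exact_mod_cast this
      calc (k : ℝ) * (β ^ q k * (k : ℝ) ^ γ)
          = ((k : ℝ) * (k : ℝ) ^ γ) * β ^ q k := by ring
        _ ≤ (k : ℝ) ^ (n : ℕ) * β ^ q k := by
            apply mul_le_mul_of_nonneg_right hstep1 (by positivity)
        _ ≤ (2 * (q k : ℝ)) ^ (n : ℕ) * β ^ q k := by
            apply mul_le_mul_of_nonneg_right hstep2 (by positivity)
        _ = W (q k) := by simp only [hW_def]; rw [mul_pow]; ring
  -- combine
  have hfinal := hg_lim.add hT_lim
  rw [add_zero] at hfinal
  refine hfinal.congr' ?_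
  filter_upwards [eventually_ge_atTop 1] with k hk
  exact (key k hk).symm
end

section
/- Let β ∈ [0,1), η > 0, γ > 0, and D, σ > 0. Define e_k = ∑_{i=1}^{k-1} β^{k-i} (D/i^η + σ/i^γ). Then e_k = O(1/k^{min(η,γ)}): there is a constant C with e_k ≤ C / k^{min(η,γ)} for all k ≥ 1. -/
open Filter Finset Topology

set_option maxHeartbeats 1000000 in
private lemma aux_bdd (p t : ℝ) (ht0 : 0 ≤ t) (ht1 : t < 1) :
    ∃ M > 0, ∀ n : ℕ, t ^ n * ((1 : ℝ) + n) ^ p ≤ M := by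
  set m := ⌈p⌉₊ with hm
  have key : ∃ M > 0, ∀ n : ℕ, t ^ n * ((1 : ℝ) + n) ^ (m : ℕ) ≤ M := by
    rcases eq_or_lt_of_le ht0 with h0 | h0
    · refine ⟨1, one_pos, fun n => ?_⟩
      cases n with
      | zero => simp
      | succ n => rw [← h0]; simp [zero_pow]
    · have ht1' : ‖t‖ < 1 := by rwa [Real.norm_eq_abs, abs_of_nonneg ht0]
      have h1 : Tendsto (fun n : ℕ => (n : ℝ) ^ m * t ^ n) atTop (𝓝 0) :=
        (Summable.of_norm (summable_norm_pow_mul_geometric_of_norm_lt_one m ht1')).tendsto_atTop_zero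
      have h2 := h1.comp (tendsto_add_atTop_nat 1)
      have h3 : Tendsto (fun n : ℕ => t ^ n * ((1 : ℝ) + n) ^ (m : ℕ)) atTop (𝓝 0) := by
        have h4 := h2.const_mul t⁻¹
        simp only [mul_zero] at h4
        convert h4 using 2 with n
        simp only [Function.comp]
        push_cast
        rw [pow_succ]
        field_simp
        ring
      obtain ⟨M, hM⟩ := h3.bddAbove_range
      refine ⟨max M 1, lt_of_lt_of_le one_pos (le_max_right _ _), fun n => ?_⟩
      exact le_trans (hM (Set.mem_range_self n)) (le_max_left _ _)
  obtain ⟨M, hM0, hM⟩ := key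
  refine ⟨M, hM0, fun n => ?_⟩
  refine le_trans ?_ (hM n)
  have h1n : (1 : ℝ) ≤ 1 + n := le_add_of_nonneg_right (Nat.cast_nonneg n)
  have : ((1 : ℝ) + n) ^ p ≤ ((1 : ℝ) + n) ^ (m : ℝ) :=
    Real.rpow_le_rpow_of_exponent_le h1n (Nat.le_ceil p)
  rw [Real.rpow_natCast] at this
  exact mul_le_mul_of_nonneg_left this (pow_nonneg ht0 n)

private lemma aux_term (β : ℝ) (hβ0 : 0 ≤ β) (hβ1 : β < 1) (p : ℝ) (hp : 0 < p) :
    ∃ M > 0, ∀ k i : ℕ, 1 ≤ i → i < k →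
      β ^ (k - i) / (i : ℝ) ^ p ≤ M * ((1 + β) / 2) ^ (k - i) / (k : ℝ) ^ p := by
  set r : ℝ := (1 + β) / 2 with hr
  have hr0 : 0 < r := by positivity
  have hβr : β < r := by rw [hr]; linarith
  have ht0 : 0 ≤ β / r := div_nonneg hβ0 hr0.le
  have ht1 : β / r < 1 := (div_lt_one hr0).2 hβr
  obtain ⟨M, hM0, hM⟩ := aux_bdd p (β / r) ht0 ht1
  refine ⟨M, hM0, fun k i hi hik => ?_⟩
  set n := k - i with hn
  have hi0 : (0 : ℝ) < i := by exact_mod_cast hi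
  have hk0 : (0 : ℝ) < k := by exact_mod_cast Nat.zero_lt_of_lt hik
  have hip : (0 : ℝ) < (i : ℝ) ^ p := Real.rpow_pos_of_pos hi0 p
  have hkp : (0 : ℝ) < (k : ℝ) ^ p := Real.rpow_pos_of_pos hk0 p
  rw [div_le_div_iff₀ hip hkp]
  have hβ : β = (β / r) * r := by field_simp
  -- k ≤ i * (1 + n)
  have hkle : (k : ℝ) ≤ (i : ℝ) * (1 + n) := by
    have : k ≤ i * (1 + n) := by
      have : k = i + n := by omega
      rw [this]; nlinarith [Nat.one_le_iff_ne_zero.1 hi]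
    exact_mod_cast this
  have hkp_le : (k : ℝ) ^ p ≤ (i : ℝ) ^ p * ((1 : ℝ) + n) ^ p := by
    rw [← Real.mul_rpow hi0.le (by positivity)]
    exact Real.rpow_le_rpow hk0.le hkle hp.le
  calc M * r ^ n * (i:ℝ) ^ p = ((β / r) ^ n * (1 + (n:ℝ)) ^ p) * (r ^ n * (i:ℝ) ^ p)
          + (M - (β / r) ^ n * (1 + (n:ℝ)) ^ p) * (r ^ n * (i:ℝ) ^ p) := by ring
    _ ≥ ((β / r) ^ n * (1 + (n:ℝ)) ^ p) * (r ^ n * (i:ℝ) ^ p) + 0 := by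
          have hnn : (0:ℝ) ≤ (M - (β / r) ^ n * (1 + (n:ℝ)) ^ p) * (r ^ n * (i:ℝ) ^ p) :=
            mul_nonneg (by linarith [hM n]) (by positivity)
          linarith
    _ = (β / r) ^ n * r ^ n * ((i:ℝ) ^ p * (1 + (n:ℝ)) ^ p) := by ring
    _ ≥ (β / r) ^ n * r ^ n * (k : ℝ) ^ p := by gcongr
    _ = β ^ n * (k : ℝ) ^ p := by rw [← mul_pow, ← hβ]
  -- done: goal was β ^ n * k ^ p ≤ M * r ^ n * i ^ p


private lemma aux_geom (r : ℝ) (hr0 : 0 ≤ r) (hr1 : r < 1) (k : ℕ) :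
    (∑ i ∈ Finset.Icc 1 (k - 1), r ^ (k - i)) ≤ 1 / (1 - r) := by
  have h1 : (∑ i ∈ Finset.Icc 1 (k - 1), r ^ (k - i))
      = ∑ j ∈ Finset.Icc 1 (k - 1), r ^ j := by
    refine Finset.sum_nbij' (fun a => k - a) (fun b => k - b) ?_ ?_ ?_ ?_ ?_
    · intro a ha; simp only [Finset.mem_Icc] at *; omega
    · intro a ha; simp only [Finset.mem_Icc] at *; omega
    · intro a ha; simp only [Finset.mem_Icc] at ha; omega
    · intro a ha; simp only [Finset.mem_Icc] at ha; omega
    · intro a ha; rfl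
  rw [h1]
  have h2 : (∑ j ∈ Finset.Icc 1 (k - 1), r ^ j) ≤ ∑ j ∈ Finset.range k, r ^ j := by
    apply Finset.sum_le_sum_of_subset_of_nonneg
    · intro j hj
      rw [Finset.mem_Icc] at hj
      rw [Finset.mem_range]
      omega
    · intros; positivity
  have hr1' : (0:ℝ) < 1 - r := by linarith
  have h3 : (∑ j ∈ Finset.range k, r ^ j) = (1 - r ^ k) / (1 - r) := by
    rw [geom_sum_eq hr1.ne k]
    rw [div_eq_div_iff (by linarith) (by linarith)]
    ring
  have h4 : (1 - r ^ k) / (1 - r) ≤ 1 / (1 - r) := by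
    rw [div_le_div_iff₀ hr1' hr1']
    nlinarith [pow_nonneg hr0 k]
  linarith

/-- The consensus error `e_k = ∑_{i=1}^{k-1} β^{k-i} (D/i^η + σ/i^γ)` is
`O(1/k^{min(η,γ)})`. -/
theorem consensus_error_bigO (β η γ D σ : ℝ) (hβ0 : 0 ≤ β) (hβ1 : β < 1)
    (hη : 0 < η) (hγ : 0 < γ) (hD : 0 < D) (hσ : 0 < σ) :
    ∃ C > 0, ∀ k : ℕ, 1 ≤ k →
      (∑ i ∈ Finset.Icc 1 (k - 1), β ^ (k - i) * (D / (i : ℝ) ^ η + σ / (i : ℝ) ^ γ))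
        ≤ C / (k : ℝ) ^ min η γ := by
  obtain ⟨Mη, hMη0, hMη⟩ := aux_term β hβ0 hβ1 η hη
  obtain ⟨Mγ, hMγ0, hMγ⟩ := aux_term β hβ0 hβ1 γ hγ
  set r : ℝ := (1 + β) / 2 with hrdef
  have hr0 : 0 < r := by positivity
  have hr1 : r < 1 := by rw [hrdef]; linarith
  refine ⟨(D * Mη + σ * Mγ) / (1 - r), div_pos (by positivity) (by linarith), fun k hk => ?_⟩
  have hk0 : (0 : ℝ) < k := by exact_mod_cast hk
  have hk1 : (1 : ℝ) ≤ k := by exact_mod_cast hk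
  have hkm : (0 : ℝ) < (k : ℝ) ^ min η γ := Real.rpow_pos_of_pos hk0 _
  have step1 : ∀ i ∈ Finset.Icc 1 (k - 1),
      β ^ (k - i) * (D / (i : ℝ) ^ η + σ / (i : ℝ) ^ γ)
        ≤ (D * Mη + σ * Mγ) * r ^ (k - i) / (k : ℝ) ^ min η γ := by
    intro i hi
    rw [Finset.mem_Icc] at hi
    have hik : i < k := by omega
    have h1 : β ^ (k - i) / (i : ℝ) ^ η ≤ Mη * r ^ (k - i) / (k : ℝ) ^ η :=
      hMη k i hi.1 hik
    have h2 : β ^ (k - i) / (i : ℝ) ^ γ ≤ Mγ * r ^ (k - i) / (k : ℝ) ^ γ :=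
      hMγ k i hi.1 hik
    have hmη : (k : ℝ) ^ min η γ ≤ (k : ℝ) ^ η :=
      Real.rpow_le_rpow_of_exponent_le hk1 (min_le_left _ _)
    have hmγ : (k : ℝ) ^ min η γ ≤ (k : ℝ) ^ γ :=
      Real.rpow_le_rpow_of_exponent_le hk1 (min_le_right _ _)
    have hrn : (0 : ℝ) ≤ r ^ (k - i) := by positivity
    have h1' : Mη * r ^ (k - i) / (k : ℝ) ^ η ≤ Mη * r ^ (k - i) / (k : ℝ) ^ min η γ := by
      gcongr
    have h2' : Mγ * r ^ (k - i) / (k : ℝ) ^ γ ≤ Mγ * r ^ (k - i) / (k : ℝ) ^ min η γ := by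
      gcongr
    have e1 : β ^ (k - i) * (D / (i : ℝ) ^ η + σ / (i : ℝ) ^ γ)
        = D * (β ^ (k - i) / (i : ℝ) ^ η) + σ * (β ^ (k - i) / (i : ℝ) ^ γ) := by ring
    rw [e1]
    have := add_le_add (mul_le_mul_of_nonneg_left (h1.trans h1') hD.le)
      (mul_le_mul_of_nonneg_left (h2.trans h2') hσ.le)
    refine this.trans (le_of_eq ?_)
    field_simp
  calc (∑ i ∈ Finset.Icc 1 (k - 1), β ^ (k - i) * (D / (i : ℝ) ^ η + σ / (i : ℝ) ^ γ))
      ≤ ∑ i ∈ Finset.Icc 1 (k - 1), (D * Mη + σ * Mγ) * r ^ (k - i) / (k : ℝ) ^ min η γ :=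
        Finset.sum_le_sum step1
    _ = (D * Mη + σ * Mγ) / (k : ℝ) ^ min η γ * ∑ i ∈ Finset.Icc 1 (k - 1), r ^ (k - i) := by
        rw [Finset.mul_sum]
        exact Finset.sum_congr rfl fun i _ => by ring
    _ ≤ (D * Mη + σ * Mγ) / (k : ℝ) ^ min η γ * (1 / (1 - r)) :=
        mul_le_mul_of_nonneg_left (aux_geom r hr0.le hr1 k) (by positivity)
    _ = (D * Mη + σ * Mγ) / (1 - r) / (k : ℝ) ^ min η γ := by ring
end
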